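/- arXiv:2312.15937 — 7 statements merged into one kernel-verified Lean document; each statement's English description precedes it below -/
import Mathlib

section
/- Let G be a finite abelian group and G_1, ..., G_n subgroups of G such that G = G_1 ∪ ... ∪ G_n and G_i ∩ G_j = {0} for i ≠ j. Then the set C = {(g_1, ..., g_n) ∈ G_1 × ... × G_n : g_1 + g_2 + ... + g_n = 0} is a 1-perfect code in the product G_1 × G_2 × ... × G_n with respect to Hamming distance. -/
/-- Herzog–Schönheim: if subgroups `G₁, …, Gₙ` partition a finite abelian group `G`,
then the zero-sum code in `G₁ × ⋯ × Gₙ` is a 1-perfect code. -/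
theorem herzog_schonheim_one_perfect (G : Type*) [AddCommGroup G] [Fintype G]
    [DecidableEq G] (n : ℕ) (Gs : Fin n → AddSubgroup G)
    (hcover : ∀ g : G, ∃ i, g ∈ Gs i)
    (hdisj : ∀ i j, i ≠ j → Gs i ⊓ Gs j = ⊥) :
    ∀ v : ∀ i, (Gs i), ∃! c : ∀ i, (Gs i),
      c ∈ {g : ∀ i, (Gs i) | (∑ i, (g i : G)) = 0} ∧ hammingDist v c ≤ 1 := by
  classical
  intro v
  set s : G := ∑ i, (v i : G) with hs
  obtain ⟨i, hi⟩ := hcover s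
  set c : ∀ i, (Gs i) := Function.update v i (v i - ⟨s, hi⟩) with hc
  have hcoe : ∀ j, (c j : G) = Function.update (fun j => (v j : G)) i ((v i : G) - s) j := by
    intro j
    by_cases hj : j = i
    · subst hj; simp [hc]
    · simp [hc, Function.update_of_ne hj]
  have hsum_rest : ∑ j ∈ Finset.univ \ {i}, (v j : G) = s - (v i : G) := by
    have := Finset.sum_sdiff (Finset.subset_univ ({i} : Finset (Fin n)))
      (f := fun j => (v j : G))
    rw [hs]
    simp only [Finset.sum_singleton] at this
    rw [← this]; abel
  have hsumc : (∑ j, (c j : G)) = 0 := by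
    rw [Finset.sum_congr rfl fun j _ => hcoe j,
      Finset.sum_update_of_mem (Finset.mem_univ i), hsum_rest]
    abel
  have hdc : hammingDist v c ≤ 1 := by
    have hsub : ({j | v j ≠ c j} : Finset (Fin n)) ⊆ {i} := by
      intro j hj
      simp only [Finset.mem_filter] at hj
      by_contra hji
      simp only [Finset.mem_singleton] at hji
      have hcv : c j = v j := by simp [hc, Function.update_of_ne hji]
      exact hj.2 hcv.symm
    calc hammingDist v c = ({j | v j ≠ c j} : Finset (Fin n)).card := rfl
      _ ≤ ({i} : Finset (Fin n)).card := Finset.card_le_card hsub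
      _ = 1 := Finset.card_singleton i
  refine ⟨c, ⟨hsumc, hdc⟩, ?_⟩
  rintro c' ⟨hsum', hd'⟩
  simp only [Set.mem_setOf_eq] at hsum'
  by_cases hvc : c' = v
  · subst hvc
    have hs0 : s = 0 := by rw [hs, ← hsum']
    funext k
    by_cases hk : k = i
    · subst hk
      apply Subtype.ext
      simp [hc, hs0]
    · simp [hc, Function.update_of_ne hk]
  · have : ∃ j, c' j ≠ v j := by
      by_contra h
      push_neg at h
      exact hvc (funext h)
    obtain ⟨j, hj⟩ := this
    have hjD : j ∈ ({k | v k ≠ c' k} : Finset (Fin n)) := by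
      simp [Ne.symm hj]
    have hcard : ({k | v k ≠ c' k} : Finset (Fin n)).card ≤ 1 := hd'
    have honly : ∀ k, k ≠ j → c' k = v k := by
      intro k hk
      by_contra hne
      have hkD : k ∈ ({k | v k ≠ c' k} : Finset (Fin n)) := by simp [Ne.symm hne]
      exact hk (Finset.card_le_one.mp hcard k hkD j hjD)
    have hrest : ∑ k ∈ Finset.univ \ {j}, (c' k : G) = ∑ k ∈ Finset.univ \ {j}, (v k : G) := by
      apply Finset.sum_congr rfl
      intro k hk
      simp only [Finset.mem_sdiff, Finset.mem_singleton] at hk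
      rw [honly k hk.2]
    have hrest' : ∑ k ∈ Finset.univ \ {j}, (v k : G) = s - (v j : G) := by
      have := Finset.sum_sdiff (Finset.subset_univ ({j} : Finset (Fin n)))
        (f := fun k => (v k : G))
      rw [hs]
      simp only [Finset.sum_singleton] at this
      rw [← this]; abel
    have hcj : (c' j : G) = (v j : G) - s := by
      have := Finset.sum_sdiff (Finset.subset_univ ({j} : Finset (Fin n)))
        (f := fun k => (c' k : G))
      simp only [Finset.sum_singleton] at this
      rw [hsum', hrest, hrest'] at this
      have h2 : (c' j : G) + s - v j = s - v j + (c' j : G) := by abel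
      rw [eq_sub_iff_add_eq, ← sub_eq_zero, h2]
      exact this
    have hsGj : s ∈ Gs j := by
      have : (v j : G) - (c' j : G) ∈ Gs j := sub_mem (v j).2 (c' j).2
      rwa [hcj, sub_sub_cancel] at this
    have hji : j = i := by
      by_contra hji
      have : s ∈ Gs i ⊓ Gs j := ⟨hi, hsGj⟩
      rw [hdisj i j (Ne.symm hji)] at this
      have hs0 : s = 0 := this
      apply hj
      apply Subtype.ext
      rw [hcj, hs0, sub_zero]
    subst hji
    funext k
    by_cases hk : k = j
    · subst hk
      apply Subtype.ext
      rw [hcj]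
      simp [hc]
    · rw [honly k hk]
      simp [hc, Function.update_of_ne hk]
end

section
/- If a finite abelian group G admits a partition into at least two proper subgroups G_1, ..., G_n (G = ∪ G_i, G_i ∩ G_j = {0} for i ≠ j, each G_i ≠ G), then G is an elementary abelian p-group for some prime p. -/
/-- A finite abelian group admitting a partition into at least two proper subgroups
is an elementary abelian `p`-group. -/
theorem partition_into_subgroups_elementary_abelian (G : Type*) [AddCommGroup G]
    [Fintype G] (n : ℕ) (hn : 2 ≤ n) (Gs : Fin n → AddSubgroup G)
    (hcover : ∀ g : G, ∃ i, g ∈ Gs i)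
    (hdisj : ∀ i j, i ≠ j → Gs i ⊓ Gs j = ⊥)
    (hproper : ∀ i, Gs i ≠ ⊤) :
    ∃ p : ℕ, p.Prime ∧ ∀ g : G, p • g = 0 := by
  classical
  -- Key lemma: orders add up via lcm across distinct parts.
  have L1 : ∀ (i j : Fin n), i ≠ j → ∀ x ∈ Gs i, ∀ y ∈ Gs j,
      addOrderOf (x + y) = Nat.lcm (addOrderOf x) (addOrderOf y) := by
    intro i j hij x hx y hy
    apply Nat.dvd_antisymm
    · rw [addOrderOf_dvd_iff_nsmul_eq_zero, smul_add,
        addOrderOf_dvd_iff_nsmul_eq_zero.1 (Nat.dvd_lcm_left _ _),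
        addOrderOf_dvd_iff_nsmul_eq_zero.1 (Nat.dvd_lcm_right _ _), add_zero]
    · set A := addOrderOf (x + y) with hA
      have h0 : A • x + A • y = 0 := by
        rw [← smul_add]; exact addOrderOf_nsmul_eq_zero _
      have hx0 : A • x = 0 := by
        have hmem : A • x ∈ Gs i ⊓ Gs j := by
          refine ⟨AddSubgroup.nsmul_mem _ hx _, ?_⟩
          rw [eq_neg_of_add_eq_zero_left h0]
          exact AddSubgroup.neg_mem _ (AddSubgroup.nsmul_mem _ hy _)
        rw [hdisj i j hij] at hmem
        exact hmem
      have hy0 : A • y = 0 := by rw [hx0, zero_add] at h0; exact h0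
      exact Nat.lcm_dvd (addOrderOf_dvd_of_nsmul_eq_zero hx0)
        (addOrderOf_dvd_of_nsmul_eq_zero hy0)
  -- elements of distinct parts, both nonzero, have equal orders
  have L2 : ∀ (i j : Fin n), i ≠ j → ∀ x ∈ Gs i, x ≠ 0 → ∀ y ∈ Gs j, y ≠ 0 →
      addOrderOf x = addOrderOf y := by
    intro i j hij x hx hx0 y hy hy0
    obtain ⟨k, hk⟩ := hcover (x + y)
    have hki : k ≠ i := by
      rintro rfl
      have : y ∈ Gs k ⊓ Gs j := ⟨by
        have := (Gs k).sub_mem hk hx; simpa using this, hy⟩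
      rw [hdisj k j hij] at this
      exact hy0 this
    have hkj : k ≠ j := by
      rintro rfl
      have : x ∈ Gs i ⊓ Gs k := ⟨hx, by
        have := (Gs k).sub_mem hk hy; simpa using this⟩
      rw [hdisj i k hij] at this
      exact hx0 this
    have e1 : addOrderOf (x + y) = Nat.lcm (addOrderOf x) (addOrderOf y) :=
      L1 i j hij x hx y hy
    -- x = (x+y) + (-y)
    have e2 : addOrderOf x = Nat.lcm (addOrderOf (x + y)) (addOrderOf (-y)) := by
      have := L1 k j hkj (x + y) hk (-y) ((Gs j).neg_mem hy)
      simpa using this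
    have e3 : addOrderOf y = Nat.lcm (addOrderOf (x + y)) (addOrderOf (-x)) := by
      have := L1 k i hki (x + y) hk (-x) ((Gs i).neg_mem hx)
      have h' : x + y + -x = y := by abel
      rw [h'] at this
      exact this
    rw [addOrderOf_neg] at e2 e3
    have hxy : addOrderOf y ∣ addOrderOf x := by
      rw [e2]; exact Nat.dvd_lcm_right _ _
    have hyx : addOrderOf x ∣ addOrderOf y := by
      rw [e3]; exact Nat.dvd_lcm_right _ _
    exact Nat.dvd_antisymm hyx hxy
  -- all nonzero elements have equal orders
  have C : ∀ x : G, x ≠ 0 → ∀ y : G, y ≠ 0 → addOrderOf x = addOrderOf y := by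
    intro x hx0 y hy0
    obtain ⟨i, hi⟩ := hcover x
    obtain ⟨j, hj⟩ := hcover y
    by_cases hij : i = j
    · subst hij
      -- find z outside Gs i
      obtain ⟨z, hz⟩ : ∃ z : G, z ∉ Gs i := by
        by_contra h
        push_neg at h
        exact hproper i (AddSubgroup.eq_top_iff' _ |>.2 h)
      obtain ⟨k, hk⟩ := hcover z
      have hki : k ≠ i := fun h => hz (h ▸ hk)
      have hz0 : z ≠ 0 := fun h => hz (h ▸ (Gs i).zero_mem)
      calc addOrderOf x = addOrderOf z := L2 i k (Ne.symm hki) x hi hx0 z hk hz0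
        _ = addOrderOf y := L2 k i hki z hk hz0 y hj hy0
    · exact L2 i j hij x hi hx0 y hj hy0
  by_cases htriv : ∀ g : G, g = 0
  · exact ⟨2, Nat.prime_two, fun g => by rw [htriv g, smul_zero]⟩
  · push_neg at htriv
    obtain ⟨x₀, hx₀⟩ := htriv
    set d := addOrderOf x₀ with hd
    have hd1 : d ≠ 1 := by
      intro h
      exact hx₀ (AddMonoid.addOrderOf_eq_one_iff.1 h)
    have hdpos : 0 < d := addOrderOf_pos x₀
    set p := d.minFac with hp
    have hpp : p.Prime := Nat.minFac_prime hd1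
    have hpd : p ∣ d := Nat.minFac_dvd d
    -- w has order p
    set w := (d / p) • x₀ with hw
    have hpw : p • w = 0 := by
      rw [hw, ← mul_smul, Nat.mul_div_cancel' hpd]
      exact addOrderOf_nsmul_eq_zero _
    have hw0 : w ≠ 0 := by
      intro h
      have : d ∣ d / p := addOrderOf_dvd_of_nsmul_eq_zero (hd ▸ h)
      have hlt : d / p < d := Nat.div_lt_self hdpos hpp.one_lt
      have hdp : 0 < d / p := Nat.div_pos (Nat.le_of_dvd hdpos hpd) hpp.pos
      exact absurd (Nat.le_of_dvd hdp this) (not_le.2 hlt)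
    have how : addOrderOf w = p := by
      have hdvd : addOrderOf w ∣ p := addOrderOf_dvd_of_nsmul_eq_zero hpw
      rcases (Nat.Prime.eq_one_or_self_of_dvd hpp _ hdvd) with h | h
      · exact absurd (AddMonoid.addOrderOf_eq_one_iff.1 h) hw0
      · exact h
    have hdp : d = p := by
      have := C x₀ hx₀ w hw0
      rw [how] at this
      exact this
    refine ⟨p, hpp, fun g => ?_⟩
    by_cases hg : g = 0
    · rw [hg, smul_zero]
    · have : addOrderOf g = p := by
        have := C g hg x₀ hx₀
        rw [this, ← hd, hdp]
      rw [← this]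
      exact addOrderOf_nsmul_eq_zero _
end

section
/- Let C' ⊆ V_m = F_1 × ... × F_m and C'' ⊆ V_{n-m} = F_{m+1} × ... × F_n be 1-perfect codes, and suppose the size of a Hamming sphere of radius 1 in V_{n-m} equals q_m = |F_m|. Suppose further that V_{n-m} admits a partition into 1-perfect codes C''_1, ..., C''_{q_m}. Let F_m = {ω_1, ..., ω_{q_m}}. Then the code C ⊆ F_1 × ... × F_{m-1} × F_{m+1} × ... × F_n obtained from C' by replacing, in each codeword, the m-th coordinate value ω_i by each codeword of C''_i, is a 1-perfect code in V_{n-1} = F_1 × ... × F_{m-1} × F_{m+1} × ... × F_n. -/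
/-- A code is 1-perfect if every word is within Hamming distance 1 of exactly one codeword. -/
def OnePerfect {ι : Type*} [Fintype ι] {β : ι → Type*} [∀ i, DecidableEq (β i)]
    (C : Set (∀ i, β i)) : Prop :=
  ∀ v : ∀ i, β i, ∃! c, c ∈ C ∧ hammingDist v c ≤ 1

lemma hd_lastCases {m : ℕ} {β : Fin (m + 1) → Type*} [∀ i, DecidableEq (β i)]
    (a : ∀ i : Fin m, β i.castSucc) (ω : β (Fin.last m)) (c : ∀ i, β i) :
    hammingDist (Fin.lastCases ω a : ∀ i, β i) c =
      hammingDist a (fun i => c i.castSucc) + (if ω = c (Fin.last m) then 0 else 1) := by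
  classical
  simp only [hammingDist, Finset.card_filter]
  rw [Fin.sum_univ_castSucc]
  simp [Fin.lastCases_castSucc, Fin.lastCases_last]

/-- Heden's construction: given a 1-perfect code `C'` in `F₁ × ⋯ × F_m`, a 1-perfect code
`C''` in `F_{m+1} × ⋯ × F_n` whose radius-1 sphere has size `q_m`, and a partition `P`
of `F_{m+1} × ⋯ × F_n` into 1-perfect codes indexed by the elements of `F_m`,
replacing the `m`-th coordinate value `ω` of each codeword of `C'` by the codewords of
`P ω` yields a 1-perfect code in `F₁ × ⋯ × F_{m-1} × F_{m+1} × ⋯ × F_n`. -/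
theorem heden_construction (m : ℕ) (β : Fin (m + 1) → Type*)
    [∀ i, Fintype (β i)] [∀ i, DecidableEq (β i)]
    (k : ℕ) (γ : Fin k → Type*) [∀ j, Fintype (γ j)] [∀ j, DecidableEq (γ j)]
    (C' : Set (∀ i, β i)) (hC' : OnePerfect C')
    (C'' : Set (∀ j, γ j)) (hC'' : OnePerfect C'')
    (hsphere : 1 + ∑ j, (Fintype.card (γ j) - 1) = Fintype.card (β (Fin.last m)))
    (P : β (Fin.last m) → Set (∀ j, γ j))
    (hP : ∀ ω, OnePerfect (P ω))
    (hPdisj : ∀ ω ω', ω ≠ ω' → Disjoint (P ω) (P ω'))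
    (hPcover : (⋃ ω, P ω) = Set.univ) :
    ∀ v : (∀ i : Fin m, β i.castSucc) × (∀ j, γ j),
      ∃! c : (∀ i : Fin m, β i.castSucc) × (∀ j, γ j),
        c ∈ {w : (∀ i : Fin m, β i.castSucc) × (∀ j, γ j) |
              ∃ c' ∈ C', (∀ i : Fin m, c' i.castSucc = w.1 i) ∧
                w.2 ∈ P (c' (Fin.last m))} ∧
        hammingDist v.1 c.1 + hammingDist v.2 c.2 ≤ 1 := by
  intro v
  -- unique ω with v.2 ∈ P ω
  have hv2 : v.2 ∈ ⋃ ω, P ω := hPcover ▸ Set.mem_univ v.2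
  obtain ⟨ω, hω⟩ : ∃ ω, v.2 ∈ P ω := by simpa using hv2
  have hωuniq : ∀ ω', v.2 ∈ P ω' → ω' = ω := by
    intro ω' h
    by_contra hne
    exact Set.disjoint_left.mp (hPdisj ω' ω hne) h hω
  set w : ∀ i, β i := Fin.lastCases ω v.1 with hw
  obtain ⟨c₀, ⟨hc₀C, hc₀d⟩, hc₀u⟩ := hC' w
  rw [hd_lastCases] at hc₀d
  obtain ⟨z, ⟨hzP, hzd⟩, hzu⟩ := hP (c₀ (Fin.last m)) v.2
  refine ⟨⟨fun i => c₀ i.castSucc, z⟩, ⟨⟨c₀, hc₀C, fun i => rfl, hzP⟩, ?_⟩, ?_⟩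
  · -- distance bound
    by_cases h0 : hammingDist v.1 (fun i => c₀ i.castSucc) = 0
    · simpa [h0] using hzd
    · -- then the ite is 0 and dist = 1
      have hlast : ω = c₀ (Fin.last m) := by
        by_contra hlast
        rw [if_neg hlast] at hc₀d
        omega
      have h1 : hammingDist v.1 (fun i => c₀ i.castSucc) = 1 := by
        rw [if_pos hlast] at hc₀d; omega
      have hzv : z = v.2 := by
        have := hzu v.2 ⟨hlast ▸ hω, by simp⟩
        exact this.symm
      simp [h1, hzv]
  · -- uniqueness
    rintro ⟨c1, c2⟩ ⟨⟨c', hc'C, hrestr, hc2P⟩, hd⟩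
    dsimp only at hd hrestr hc2P
    have hr : (fun i : Fin m => c' i.castSucc) = c1 := funext hrestr
    rcases Nat.le_one_iff_eq_zero_or_eq_one.mp hd with h | h
    ·
      have ha : hammingDist v.1 c1 = 0 := by omega
      have hb : hammingDist v.2 c2 = 0 := by omega
      have hc1 : v.1 = c1 := eq_of_hammingDist_eq_zero ha
      have hc2 : v.2 = c2 := eq_of_hammingDist_eq_zero hb
      -- c' last = ω
      have hlast : c' (Fin.last m) = ω := hωuniq _ (hc2 ▸ hc2P)
      have hcc : c' = c₀ := by
        apply hc₀u
        refine ⟨hc'C, ?_⟩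
        rw [hd_lastCases, hr, ← hc1]
        simp [hlast, ha]
      have hz : z = v.2 := (hzu v.2 ⟨hcc ▸ hlast.symm ▸ hω, by simp⟩).symm
      refine Prod.ext ?_ ?_
      · simp only
        rw [← hr, hcc]
      · simp only; rw [← hc2, hz]
    · rcases Nat.add_eq_one_iff.mp h with ⟨ha, hb⟩ | ⟨ha, hb⟩
      · -- d(v1,c1)=0, d(v2,c2)=1
        have hc1 : v.1 = c1 := eq_of_hammingDist_eq_zero ha
        have hcc : c' = c₀ := by
          apply hc₀u
          refine ⟨hc'C, ?_⟩
          rw [hd_lastCases, hr, ← hc1]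
          simp only [hammingDist_self, Nat.zero_add]
          split <;> simp
        have hc2z : c2 = z := hzu c2 ⟨hcc ▸ hc2P, by omega⟩
        refine Prod.ext ?_ ?_
        · simp only; rw [← hr, hcc]
        · simpa using hc2z
      · -- d(v1,c1)=1, d(v2,c2)=0
        have hc2 : v.2 = c2 := eq_of_hammingDist_eq_zero hb
        have hlast : c' (Fin.last m) = ω := hωuniq _ (hc2 ▸ hc2P)
        have hcc : c' = c₀ := by
          apply hc₀u
          refine ⟨hc'C, ?_⟩
          rw [hd_lastCases, hr]
          simp [hlast, ha]
        have hz : z = v.2 := by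
          refine (hzu v.2 ⟨?_, by simp⟩).symm
          rw [← hcc, hlast]; exact hω
        refine Prod.ext ?_ ?_
        · simp only; rw [← hr, hcc]
        · simp only; rw [← hc2, hz]
end

section
/- Let C'_1, ..., C'_{2^m} be a partition of the set of even-weight words of F_2^{2^m} into binary extended 1-perfect codes of length 2^m, let C''_1, ..., C''_{2^m} be a partition of F_2^{2^m - 1} into binary 1-perfect codes of length 2^m - 1, and let π be a permutation of {1, ..., 2^m}. Then C = {(u|v) : u ∈ C'_i, v ∈ C''_{π(i)}, i = 1, ..., 2^m} is a binary 1-perfect code of length 2^{m+1} - 1. -/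
lemma hammingDist_eq_sum {ι : Type*} [Fintype ι] {β : ι → Type*} [∀ i, DecidableEq (β i)]
    (x y : ∀ i, β i) : hammingDist x y = ∑ i, if x i ≠ y i then 1 else 0 := by
  rw [hammingDist, Finset.card_filter]

lemma hammingDist_append {p q : ℕ} (a u : Fin p → ZMod 2) (b v : Fin q → ZMod 2) :
    hammingDist (Fin.append a b) (Fin.append u v) = hammingDist a u + hammingDist b v := by
  rw [hammingDist_eq_sum, hammingDist_eq_sum, hammingDist_eq_sum, Fin.sum_univ_add]
  simp [Fin.append_left, Fin.append_right]

lemma append_extract {p q : ℕ} (x : Fin (p+q) → ZMod 2) :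
    Fin.append (fun i => x (Fin.castAdd q i)) (fun j => x (Fin.natAdd p j)) = x := by
  funext t
  induction t using Fin.addCases <;> simp [Fin.append_left, Fin.append_right]

lemma zmod2_cases : ∀ z : ZMod 2, z = 0 ∨ z = 1 := by decide

lemma zmod2_key1 : ∀ s t z : ZMod 2, (1 : ZMod 2) = s - t → s + z = 1 → z = t := by decide

lemma zmod2_add_eq_zero : ∀ x y : ZMod 2, x + y = 0 → y = x := by decide

lemma hammingDist_cast_zmod2 {k : ℕ} (x y : Fin k → ZMod 2) :
    (hammingDist x y : ZMod 2) = ∑ i, x i - ∑ i, y i := by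
  rw [hammingDist_eq_sum, Nat.cast_sum, ← Finset.sum_sub_distrib]
  refine Finset.sum_congr rfl fun i _ => ?_
  rcases zmod2_cases (x i) with hx | hx <;> rcases zmod2_cases (y i) with hy | hy <;>
    rw [hx, hy] <;> decide

lemma sum_split_pow {M : Type*} [AddCommMonoid M] (m : ℕ) (x : Fin (2^m) → M) :
    ∑ t, x t = (∑ j : Fin (2^m-1), x (Fin.castLE (Nat.sub_le _ _) j))
      + x ⟨2^m-1, by have := Nat.one_le_two_pow (n := m); omega⟩ := by
  have e : 2^m = (2^m - 1) + 1 := by have := Nat.one_le_two_pow (n := m); omega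
  rw [Fintype.sum_equiv (finCongr e) x (fun t => x (Fin.cast e.symm t)) (fun t => rfl)]
  rw [Fin.sum_univ_castSucc]
  rfl

lemma hammingDist_split_pow (m : ℕ) (x y : Fin (2^m) → ZMod 2) :
    hammingDist x y = hammingDist (fun j : Fin (2^m-1) => x (Fin.castLE (Nat.sub_le _ _) j))
        (fun j => y (Fin.castLE (Nat.sub_le _ _) j))
      + (if x ⟨2^m-1, by have := Nat.one_le_two_pow (n := m); omega⟩
            ≠ y ⟨2^m-1, by have := Nat.one_le_two_pow (n := m); omega⟩ then 1 else 0) := by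
  rw [hammingDist_eq_sum, sum_split_pow, hammingDist_eq_sum]



/-- The extension of a binary code of length `2^m - 1` by an overall parity check. -/
def ExtendedCode (m : ℕ) (D : Set (Fin (2 ^ m - 1) → ZMod 2)) :
    Set (Fin (2 ^ m) → ZMod 2) :=
  {x | (fun j : Fin (2 ^ m - 1) => x (Fin.castLE (Nat.sub_le _ _) j)) ∈ D ∧ ∑ t, x t = 0}

lemma extended_unique (m : ℕ) (D : Set (Fin (2^m - 1) → ZMod 2)) (hD : OnePerfect D)
    (a : Fin (2^m) → ZMod 2) (ha : ∑ t, a t = 1) :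
    ∃! u, u ∈ ExtendedCode m D ∧ hammingDist a u ≤ 1 := by
  have hlt : 2^m - 1 < 2^m := by have := Nat.one_le_two_pow (n := m); omega
  set a' : Fin (2^m-1) → ZMod 2 := fun j => a (Fin.castLE (Nat.sub_le _ _) j) with ha'
  obtain ⟨c', ⟨hc'D, hc'd⟩, hc'u⟩ := hD a'
  set u0 : Fin (2^m) → ZMod 2 :=
    fun t => if h : (t : ℕ) < 2^m - 1 then c' ⟨t, h⟩ else ∑ j, c' j with hu0
  have hpunct : (fun j : Fin (2^m-1) => u0 (Fin.castLE (Nat.sub_le _ _) j)) = c' := by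
    funext j
    have hj : ((Fin.castLE (Nat.sub_le _ _) j : Fin (2^m)) : ℕ) < 2^m - 1 := j.isLt
    rw [hu0]
    simp only [dif_pos hj]
    exact congrArg c' (Fin.ext rfl)
  have hlast : u0 ⟨2^m-1, hlt⟩ = ∑ j, c' j := by rw [hu0]; simp
  have hsum0 : ∑ t, u0 t = 0 := by
    rw [sum_split_pow, hlast]
    have : (∑ j : Fin (2^m-1), u0 (Fin.castLE (Nat.sub_le _ _) j)) = ∑ j, c' j := by
      rw [hpunct]
    rw [this, CharTwo.add_self_eq_zero]
  have hmem : u0 ∈ ExtendedCode m D := ⟨by rw [hpunct]; exact hc'D, hsum0⟩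
  -- parity of a
  have hasplit : (∑ j, a' j) + a ⟨2^m-1, hlt⟩ = 1 := by rw [← ha, sum_split_pow]
  have hdd : hammingDist a u0 ≤ 1 := by
    rw [hammingDist_split_pow]
    have h1 : hammingDist (fun j : Fin (2^m-1) => a (Fin.castLE (Nat.sub_le _ _) j))
        (fun j => u0 (Fin.castLE (Nat.sub_le _ _) j)) = hammingDist a' c' := by
      rw [hpunct]
    rw [h1]
    rcases Nat.le_one_iff_eq_zero_or_eq_one.mp hc'd with h0 | h1'
    · rw [h0]
      split <;> omega
    · rw [h1']
      have hpar := hammingDist_cast_zmod2 a' c'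
      rw [h1'] at hpar
      rw [Nat.cast_one] at hpar
      have : a ⟨2^m-1, hlt⟩ = u0 ⟨2^m-1, hlt⟩ := by
        rw [hlast]
        exact zmod2_key1 _ _ _ hpar hasplit
      rw [if_neg (by simp [this])]
  refine ⟨u0, ⟨hmem, hdd⟩, ?_⟩
  intro u ⟨⟨huD, husum⟩, hud⟩
  have hsplit := hammingDist_split_pow m a u
  have hud' : hammingDist a' (fun j : Fin (2^m-1) => u (Fin.castLE (Nat.sub_le _ _) j)) ≤ 1 := by
    rw [ha']
    omega
  have hu'c : (fun j : Fin (2^m-1) => u (Fin.castLE (Nat.sub_le _ _) j)) = c' := hc'u _ ⟨huD, hud'⟩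
  have husplit : (∑ j : Fin (2^m-1), u (Fin.castLE (Nat.sub_le _ _) j)) + u ⟨2^m-1, hlt⟩ = 0 := by
    rw [← husum, sum_split_pow]
  have hulast : u ⟨2^m-1, hlt⟩ = ∑ j, c' j :=
    calc u ⟨2^m-1, hlt⟩ = ∑ j : Fin (2^m-1), u (Fin.castLE (Nat.sub_le _ _) j) :=
          zmod2_add_eq_zero _ _ husplit
      _ = ∑ j, c' j := by rw [hu'c]
  funext t
  simp only [hu0]
  by_cases h : (t : ℕ) < 2^m - 1
  · rw [dif_pos h, ← hu'c]
    exact congrArg u (Fin.ext rfl)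
  · rw [dif_neg h]
    have ht : t = ⟨2^m-1, hlt⟩ := Fin.ext (show (t:ℕ) = 2^m-1 by have := t.isLt; omega)
    rw [ht, hulast]

/-- The doubling construction: concatenating a partition of the even-weight words of
`F₂^{2^m}` into extended 1-perfect codes with a partition of `F₂^{2^m-1}` into
1-perfect codes (matched by a permutation `π`) yields a binary 1-perfect code of
length `2^{m+1} - 1`. -/
theorem doubling_construction (m : ℕ)
    (C' : Fin (2 ^ m) → Set (Fin (2 ^ m) → ZMod 2))
    (D : Fin (2 ^ m) → Set (Fin (2 ^ m - 1) → ZMod 2))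
    (hD : ∀ i, OnePerfect (D i))
    (hC'ext : ∀ i, C' i = ExtendedCode m (D i))
    (hC'disj : ∀ i j, i ≠ j → Disjoint (C' i) (C' j))
    (hC'cover : (⋃ i, C' i) = {x : Fin (2 ^ m) → ZMod 2 | ∑ t, x t = 0})
    (C'' : Fin (2 ^ m) → Set (Fin (2 ^ m - 1) → ZMod 2))
    (hC'' : ∀ i, OnePerfect (C'' i))
    (hC''disj : ∀ i j, i ≠ j → Disjoint (C'' i) (C'' j))
    (hC''cover : (⋃ i, C'' i) = Set.univ)
    (π : Equiv.Perm (Fin (2 ^ m))) :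
    OnePerfect {w : Fin (2 ^ (m + 1) - 1) → ZMod 2 |
      ∃ i, ∃ u ∈ C' i, ∃ v ∈ C'' (π i),
        w = fun t => Fin.append u v
          (Fin.cast (by have := Nat.one_le_two_pow (n := m); rw [pow_succ]; omega) t)} := by
  intro w
  have e : 2 ^ (m + 1) - 1 = 2 ^ m + (2 ^ m - 1) := by
    have := Nat.one_le_two_pow (n := m); rw [pow_succ]; omega
  set x : Fin (2 ^ m + (2 ^ m - 1)) → ZMod 2 := fun s => w (Fin.cast e.symm s) with hxdef
  set a : Fin (2 ^ m) → ZMod 2 := fun i => x (Fin.castAdd _ i) with hadef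
  set b : Fin (2 ^ m - 1) → ZMod 2 := fun j => x (Fin.natAdd _ j) with hbdef
  have hx : Fin.append a b = x := append_extract x
  have hdist : ∀ (u : Fin (2 ^ m) → ZMod 2) (v : Fin (2 ^ m - 1) → ZMod 2),
      hammingDist w (fun t => Fin.append u v (Fin.cast e t))
        = hammingDist a u + hammingDist b v := by
    intro u v
    rw [← hammingDist_append, hx]
    rw [hammingDist_eq_sum, hammingDist_eq_sum]
    exact Fintype.sum_equiv (finCongr e) _ _ (fun t => rfl)
  have key : ∃! p : (Fin (2 ^ m) → ZMod 2) × (Fin (2 ^ m - 1) → ZMod 2),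
      (∃ i, p.1 ∈ C' i ∧ p.2 ∈ C'' (π i))
        ∧ hammingDist a p.1 + hammingDist b p.2 ≤ 1 := by
    by_cases hpar : ∑ t, a t = 0
    · obtain ⟨i0, hi0⟩ : ∃ i, a ∈ C' i := by
        have : a ∈ ⋃ i, C' i := by rw [hC'cover]; exact hpar
        exact Set.mem_iUnion.mp this
      obtain ⟨v0, ⟨hv0m, hv0d⟩, hv0u⟩ := hC'' (π i0) b
      refine ⟨(a, v0), ⟨⟨i0, hi0, hv0m⟩, by simpa using hv0d⟩, ?_⟩
      rintro ⟨u, v⟩ ⟨⟨i, hu, hv⟩, hd⟩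
      dsimp only at hu hv hd
      have hue : ∑ t, u t = 0 := by rw [hC'ext i] at hu; exact hu.2
      have hpar2 : ((hammingDist a u : ℕ) : ZMod 2) = 0 := by
        rw [hammingDist_cast_zmod2, hpar, hue, sub_zero]
      have hd0 : hammingDist a u = 0 := by
        rcases Nat.le_one_iff_eq_zero_or_eq_one.mp (le_trans (Nat.le_add_right _ _) hd)
          with h | h
        · exact h
        · rw [h] at hpar2; exact absurd hpar2 (by decide)
      have hua : u = a := (hammingDist_eq_zero.mp hd0).symm
      subst hua
      have hii : i = i0 := by
        by_contra hne
        exact Set.disjoint_left.mp (hC'disj i i0 hne) hu hi0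
      subst hii
      have hv' : v = v0 := hv0u v ⟨hv, by omega⟩
      rw [hv']
    · have hpar1 : ∑ t, a t = 1 := by
        rcases zmod2_cases (∑ t, a t) with h | h
        · exact absurd h hpar
        · exact h
      obtain ⟨k, hk⟩ : ∃ k, b ∈ C'' k := by
        have : b ∈ ⋃ i, C'' i := by rw [hC''cover]; trivial
        exact Set.mem_iUnion.mp this
      have hk' : b ∈ C'' (π (π.symm k)) := by rw [Equiv.apply_symm_apply]; exact hk
      obtain ⟨u0, ⟨hu0m, hu0d⟩, hu0u⟩ := extended_unique m (D (π.symm k)) (hD _) a hpar1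
      have hu0C : u0 ∈ C' (π.symm k) := by rw [hC'ext]; exact hu0m
      refine ⟨(u0, b), ⟨⟨π.symm k, hu0C, hk'⟩, by simpa using hu0d⟩, ?_⟩
      rintro ⟨u, v⟩ ⟨⟨i, hu, hv⟩, hd⟩
      dsimp only at hu hv hd
      have hue : ∑ t, u t = 0 := by rw [hC'ext i] at hu; exact hu.2
      have hpar2 : ((hammingDist a u : ℕ) : ZMod 2) = 1 := by
        rw [hammingDist_cast_zmod2, hpar1, hue, sub_zero]
      have hne0 : hammingDist a u ≠ 0 := by
        intro h; rw [h] at hpar2; exact absurd hpar2 (by decide)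
      have hd1 : hammingDist b v = 0 := by omega
      have hvb : v = b := (hammingDist_eq_zero.mp hd1).symm
      subst hvb
      have hik : i = π.symm k := by
        have hpik : π i = k := by
          by_contra hne
          exact Set.disjoint_left.mp (hC''disj _ _ hne) hv hk
        rw [← hpik, Equiv.symm_apply_apply]
      subst hik
      have : u = u0 := hu0u u ⟨by rw [← hC'ext]; exact hu, by omega⟩
      rw [this]
  obtain ⟨⟨u0, v0⟩, ⟨⟨i0, hu0, hv0⟩, hd0⟩, huniq⟩ := key
  refine ⟨fun t => Fin.append u0 v0 (Fin.cast e t),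
    ⟨⟨i0, u0, hu0, v0, hv0, rfl⟩, by rw [hdist]; exact hd0⟩, ?_⟩
  rintro c ⟨⟨i, u, hu, v, hv, rfl⟩, hdc⟩
  have hp : (u, v) = (u0, v0) := by
    refine huniq (u, v) ⟨⟨i, hu, hv⟩, ?_⟩
    rw [← hdist u v]
    exact hdc
  have h1 : u = u0 := congrArg Prod.fst hp
  have h2 : v = v0 := congrArg Prod.snd hp
  subst h1; subst h2
  rfl
end

section
/- Let n = q^m with m ≥ 2, let F_n = {ω_1, ..., ω_n} be the field of order n, and let C'_1, ..., C'_n be a partition of a q-ary distance-2 MDS code of length n into q-ary codes each having parameters (n, q^{n-m-1}, 3) (Reed–Muller-like codes of order (q-1)m-2). Then C = {(ω_i | v) : v ∈ C'_i, i = 1, ..., n} is a 1-perfect mixed code in F_n × F_q^n. -/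
/-!
Sphere packing with equality. A radius-1 ball in `F_n × F_q^n` has `n + n(q - 1) = q^(m+1)`
points. Distinct codewords are at distance at least 3: inside one part because the part has
distance 3, across parts because the two words lie in the distance-2 MDS code and their first
coordinates also differ. So the `n · q^(n-m-1)` balls are disjoint, and together they have
`n · q^n` points, which is the whole space.
-/

open Finset Function

theorem sigma_eq_of_update_eq_update {ι : Type*} [DecidableEq ι] {β : ι → Type*}
    {u : ∀ i, β i} {i j : ι} {a : β i} {b : β j} (ha : a ≠ u i)
    (h : update u i a = update u j b) : (⟨i, a⟩ : Σ i, β i) = ⟨j, b⟩ := by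
  obtain rfl : i = j := by
    by_contra hij
    exact ha (by simpa [hij] using congrFun h i)
  simpa using congrFun h i

section Hamming

variable {ι : Type*} [Fintype ι] [DecidableEq ι] {β : ι → Type*} [∀ i, DecidableEq (β i)]

theorem hammingDist_update_self (u : ∀ i, β i) {i : ι} {a : β i} (ha : a ≠ u i) :
    hammingDist (update u i a) u = 1 := by
  rw [hammingDist, card_eq_one]
  refine ⟨i, ?_⟩
  ext j
  by_cases h : j = i
  · subst h; simpa using ha
  · simp [h]

theorem exists_eq_update_of_hammingDist_eq_one {v u : ∀ i, β i} (h : hammingDist v u = 1) :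
    ∃ i, v i ≠ u i ∧ v = update u i (v i) := by
  obtain ⟨i, hi⟩ := card_eq_one.1 h
  have hdiff : ∀ j, v j ≠ u j ↔ j = i := fun j => by
    simpa using congrArg (j ∈ ·) hi
  refine ⟨i, (hdiff i).2 rfl, funext fun j => ?_⟩
  by_cases hj : j = i
  · subst hj; simp
  · simpa [hj] using (hdiff j).not.2 hj

variable [∀ i, Fintype (β i)]

theorem card_hammingDist_eq_one (u : ∀ i, β i) :
    #{v | hammingDist v u = 1} = ∑ i, (Fintype.card (β i) - 1) := by
  have : #(univ.sigma fun i => univ.erase (u i)) = #{v | hammingDist v u = 1} := by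
    refine card_bij (fun p _ => update u p.1 p.2) ?_ ?_ ?_
    · rintro ⟨i, a⟩ hp
      simpa using hammingDist_update_self u (mem_erase.1 (mem_sigma.1 hp).2).1
    · rintro ⟨i, a⟩ hp ⟨j, b⟩ _ h
      exact sigma_eq_of_update_eq_update (mem_erase.1 (mem_sigma.1 hp).2).1 h
    · intro v hv
      obtain ⟨i, hi, hv⟩ := exists_eq_update_of_hammingDist_eq_one (mem_filter.1 hv).2
      exact ⟨⟨i, v i⟩, by simpa using hi, hv.symm⟩
  simp [← this, card_sigma, card_erase_of_mem]

end Hamming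

theorem existsUnique_dist_le_of_ncard_mul_eq {α : Type*} [Fintype α] (d : α → α → ℕ)
    (d_comm : ∀ x y, d x y = d y x) (d_triangle : ∀ x y z, d x z ≤ d x y + d y z)
    {r N : ℕ} (C : Set α) (hsep : ∀ c ∈ C, ∀ c' ∈ C, c ≠ c' → 2 * r < d c c')
    (hball : ∀ c ∈ C, #{w | d w c ≤ r} = N) (hcard : C.ncard * N = Fintype.card α) (w : α) :
    ∃! c, c ∈ C ∧ d w c ≤ r := by
  classical
  have unique : ∀ c ∈ C, ∀ c' ∈ C, ∀ w, d w c ≤ r → d w c' ≤ r → c = c' := by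
    intro c hc c' hc' w hw hw'
    by_contra hne
    have := d_triangle c w c'
    rw [d_comm c w] at this
    have := hsep c hc c' hc' hne
    omega
  have cover : C.toFinset.biUnion (fun c => {w | d w c ≤ r}) = univ := by
    refine eq_univ_of_card _ ?_
    rw [card_biUnion, sum_congr rfl fun c hc => hball c (Set.mem_toFinset.1 hc), sum_const,
      smul_eq_mul, ← Set.ncard_eq_toFinset_card', hcard]
    intro c hc c' hc' hne
    refine disjoint_left.2 fun w hw hw' => hne ?_
    exact unique c (Set.mem_toFinset.1 hc) c' (Set.mem_toFinset.1 hc') w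
      (mem_filter.1 hw).2 (mem_filter.1 hw').2
  obtain ⟨c, hc, hw⟩ := mem_biUnion.1 (cover ▸ mem_univ w)
  rw [Set.mem_toFinset] at hc
  exact ⟨c, ⟨hc, (mem_filter.1 hw).2⟩, fun c' h' => unique c' h'.1 c hc w h'.2 (mem_filter.1 hw).2⟩

theorem ncard_setOf_snd_mem {K V : Type*} [Fintype K] [Finite V] (C : K → Set V) :
    {c : K × V | c.2 ∈ C c.1}.ncard = ∑ ω, (C ω).ncard := by
  classical
  have := Fintype.ofFinite V
  rw [Set.ncard_eq_toFinset_card', Set.toFinset_ofPred, card_filter, Fintype.sum_prod_type]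
  refine sum_congr rfl fun ω _ => ?_
  rw [Set.ncard_eq_toFinset_card', ← card_filter]
  congr 1
  ext; simp

section Mixed

variable {K ι F : Type*} [DecidableEq K] [Fintype ι] [DecidableEq F]

def mixedDist (w c : K × (ι → F)) : ℕ := (if w.1 = c.1 then 0 else 1) + hammingDist w.2 c.2

theorem mixedDist_comm (w c : K × (ι → F)) : mixedDist w c = mixedDist c w := by
  simp only [mixedDist, eq_comm, hammingDist_comm]

theorem mixedDist_triangle (x y z : K × (ι → F)) :
    mixedDist x z ≤ mixedDist x y + mixedDist y z := by
  have := hammingDist_triangle x.2 y.2 z.2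
  unfold mixedDist
  split_ifs <;> first | omega | simp_all

theorem mixedDist_le_one_iff {w c : K × (ι → F)} :
    mixedDist w c ≤ 1 ↔ w.2 = c.2 ∨ w.1 = c.1 ∧ hammingDist w.2 c.2 = 1 := by
  rw [← hammingDist_eq_zero]
  unfold mixedDist
  split_ifs with h <;> simp only [h, true_and, false_and, or_false] <;> omega

theorem card_mixedDist_le_one [Fintype K] [DecidableEq ι] [Fintype F] (c : K × (ι → F)) :
    #{w | mixedDist w c ≤ 1} = Fintype.card K + Fintype.card ι * (Fintype.card F - 1) := by
  have hball : ({w | mixedDist w c ≤ 1} : Finset _)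
      = univ ×ˢ {c.2} ∪ {c.1} ×ˢ ({v | hammingDist v c.2 = 1} : Finset (ι → F)) := by
    ext w
    simp only [mem_filter, mem_univ, true_and, mixedDist_le_one_iff, mem_union, mem_product,
      mem_singleton]
  have hdisj : Disjoint (univ ×ˢ {c.2}) ({c.1} ×ˢ ({v | hammingDist v c.2 = 1} : Finset _)) := by
    simp only [disjoint_left, mem_product, mem_singleton, mem_filter, mem_univ, true_and]
    intro w hw h1
    simp [hw] at h1
  rw [hball, card_union_of_disjoint hdisj, card_product, card_product, card_hammingDist_eq_one]
  simp

theorem two_lt_mixedDist_of_mem {C : K → Set (ι → F)}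
    (hdisj : ∀ ω ω', ω ≠ ω' → Disjoint (C ω) (C ω'))
    (hunion : ∀ u ∈ ⋃ ω, C ω, ∀ v ∈ ⋃ ω, C ω, u ≠ v → 2 ≤ hammingDist u v)
    (hpart : ∀ ω, ∀ u ∈ C ω, ∀ v ∈ C ω, u ≠ v → 3 ≤ hammingDist u v)
    {c c' : K × (ι → F)} (hc : c.2 ∈ C c.1) (hc' : c'.2 ∈ C c'.1) (hne : c ≠ c') :
    2 < mixedDist c c' := by
  unfold mixedDist
  split_ifs with h
  · have h2 : c.2 ≠ c'.2 := fun h2 => hne (Prod.ext h h2)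
    have := hpart c.1 c.2 hc c'.2 (h ▸ hc') h2
    omega
  · have h2 : c.2 ≠ c'.2 := fun h2 => Set.disjoint_left.1 (hdisj _ _ h) hc (h2 ▸ hc')
    have := hunion c.2 (Set.mem_iUnion_of_mem _ hc) c'.2 (Set.mem_iUnion_of_mem _ hc') h2
    omega

end Mixed

theorem mixed_perfect_from_RM_like_general (q m : ℕ)
    (K F : Type*) [Fintype K] [DecidableEq K]
    [Field F] [Fintype F] [DecidableEq F]
    (hK : Fintype.card K = q ^ m) (hF : Fintype.card F = q)
    (C' : K → Set (Fin (q ^ m) → F))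
    (hdisj : ∀ ω ω', ω ≠ ω' → Disjoint (C' ω) (C' ω'))
    -- the union of the parts is a distance-2 MDS code of length n = q^m
    (hMDSdist : ∀ u ∈ ⋃ ω, C' ω, ∀ v ∈ ⋃ ω, C' ω, u ≠ v → 2 ≤ hammingDist u v)
    -- each part is a Reed–Muller-like code with parameters (n, q^{n-m-1}, 3)_q
    (hcard : ∀ ω, (C' ω).ncard = q ^ (q ^ m - m - 1))
    (hdist : ∀ ω, ∀ u ∈ C' ω, ∀ v ∈ C' ω, u ≠ v → 3 ≤ hammingDist u v) :
    ∀ w : K × (Fin (q ^ m) → F), ∃! c : K × (Fin (q ^ m) → F),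
      c.2 ∈ C' c.1 ∧
      (if w.1 = c.1 then 0 else 1) + hammingDist w.2 c.2 ≤ 1 := by
  have hq : 1 < q := hF ▸ Fintype.one_lt_card
  have hmq : m < q ^ m := Nat.lt_pow_self hq
  have hball : q ^ m + q ^ m * (q - 1) = q ^ (m + 1) := by
    rw [add_comm, ← Nat.mul_add_one, Nat.sub_add_cancel hq.le, pow_succ]
  have hcode : {c : K × (Fin (q ^ m) → F) | c.2 ∈ C' c.1}.ncard * q ^ (m + 1)
      = Fintype.card (K × (Fin (q ^ m) → F)) := by
    simp only [ncard_setOf_snd_mem, hcard, sum_const, card_univ, hK, smul_eq_mul,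
      Fintype.card_prod, Fintype.card_fun, Fintype.card_fin, hF]
    rw [mul_assoc, ← pow_add, Nat.sub_sub, Nat.sub_add_cancel hmq]
  exact existsUnique_dist_le_of_ncard_mul_eq mixedDist mixedDist_comm mixedDist_triangle _
    (fun c hc c' hc' => two_lt_mixedDist_of_mem hdisj hMDSdist hdist hc hc')
    (fun c _ => by rw [card_mixedDist_le_one, Fintype.card_fin, hK, hF, hball]) hcode

/-- Construction of 1-perfect mixed codes in `F_n × F_q^n`, `n = q^m`:
if `C'_ω` (indexed by `ω ∈ F_n`) is a partition of a `q`-ary distance-2 MDS code of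
length `n` into Reed–Muller-like codes with parameters `(n, q^{n-m-1}, 3)_q`, then
`C = {(ω, v) : v ∈ C'_ω}` is a 1-perfect code in `F_n × F_q^n`. -/
theorem mixed_perfect_from_RM_like (q m : ℕ) (hm : 2 ≤ m)
    (K F : Type*) [Field K] [Fintype K] [DecidableEq K]
    [Field F] [Fintype F] [DecidableEq F]
    (hK : Fintype.card K = q ^ m) (hF : Fintype.card F = q)
    (C' : K → Set (Fin (q ^ m) → F))
    (hdisj : ∀ ω ω', ω ≠ ω' → Disjoint (C' ω) (C' ω'))
    -- the union of the parts is a distance-2 MDS code of length n = q^m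
    (hMDScard : (⋃ ω, C' ω).ncard = q ^ (q ^ m - 1))
    (hMDSdist : ∀ u ∈ ⋃ ω, C' ω, ∀ v ∈ ⋃ ω, C' ω, u ≠ v → 2 ≤ hammingDist u v)
    (hMDSdist2 : ∃ u ∈ ⋃ ω, C' ω, ∃ v ∈ ⋃ ω, C' ω, u ≠ v ∧ hammingDist u v = 2)
    -- each part is a Reed–Muller-like code with parameters (n, q^{n-m-1}, 3)_q
    (hcard : ∀ ω, (C' ω).ncard = q ^ (q ^ m - m - 1))
    (hdist : ∀ ω, ∀ u ∈ C' ω, ∀ v ∈ C' ω, u ≠ v → 3 ≤ hammingDist u v)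
    (hdist3 : ∀ ω, ∃ u ∈ C' ω, ∃ v ∈ C' ω, u ≠ v ∧ hammingDist u v = 3) :
    ∀ w : K × (Fin (q ^ m) → F), ∃! c : K × (Fin (q ^ m) → F),
      c.2 ∈ C' c.1 ∧
      (if w.1 = c.1 then 0 else 1) + hammingDist w.2 c.2 ≤ 1 :=
  mixed_perfect_from_RM_like_general q m K F hK hF C' hdisj hMDSdist hcard hdist
end

section
/- Let A^1, ..., A^q be a partition of F_q^{q^{m_1}} into q-ary distance-2 MDS codes of length q^{m_1}, let B be a q-ary distance-2 MDS code of length q^{m_2}, and fix a bijection between {1, ..., q} and F_q. Then C = {(u_1 | u_2 | ... | u_{q^{m_2}}) : u_i ∈ A^{v_i}, v = (v_1, ..., v_{q^{m_2}}) ∈ B} is a q-ary distance-2 MDS code of length q^{m_1 + m_2}. -/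
/-- The `i`-th length-`q^m₁` block of a word of length `q^(m₁+m₂)`. -/
def block {F : Type*} (q m1 m2 : ℕ) (w : Fin (q ^ (m1 + m2)) → F)
    (i : Fin (q ^ m2)) : Fin (q ^ m1) → F :=
  fun j => w (Fin.cast (by ring) (finProdFinEquiv (i, j)))

/-- The index equivalence underlying `block`. -/
def idxE (q m1 m2 : ℕ) : (Fin (q ^ m2) × Fin (q ^ m1)) ≃ Fin (q ^ (m1 + m2)) :=
  finProdFinEquiv.trans (finCongr (by ring))

/-- Words of length `q^(m1+m2)` correspond to `q^m2`-tuples of words of length `q^m1`. -/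
def blocksE (q m1 m2 : ℕ) (F : Type*) :
    (Fin (q ^ (m1 + m2)) → F) ≃ (Fin (q ^ m2) → Fin (q ^ m1) → F) :=
  ((idxE q m1 m2).symm.arrowCongr (Equiv.refl F)).trans (Equiv.curry _ _ _)

lemma block_eq {F : Type*} (q m1 m2 : ℕ) (w : Fin (q ^ (m1 + m2)) → F) (i : Fin (q ^ m2)) :
    block q m1 m2 w i = blocksE q m1 m2 F w i := rfl

lemma hd_sum {F : Type*} [DecidableEq F] (q m1 m2 : ℕ) (w w' : Fin (q ^ (m1 + m2)) → F) :
    hammingDist w w' = ∑ i, hammingDist (block q m1 m2 w i) (block q m1 m2 w' i) := by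
  simp only [hammingDist, Finset.card_filter]
  rw [← Equiv.sum_comp (idxE q m1 m2) (fun k => if w k ≠ w' k then 1 else 0),
    Fintype.sum_prod_type]
  rfl

/-- Phelps-type product: if `A_a` (indexed by `a ∈ F_q`) is a partition of `F_q^{q^{m₁}}`
into distance-2 MDS codes and `B` is a distance-2 MDS code of length `q^{m₂}`, then the
concatenation code `C` is a distance-2 MDS code of length `q^{m₁+m₂}`. -/
theorem product_of_MDS2 (q m1 m2 : ℕ) (hm1 : 1 ≤ m1) (hm2 : 1 ≤ m2)
    (F : Type*) [Fintype F] [DecidableEq F] (hF : Fintype.card F = q)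
    (A : F → Set (Fin (q ^ m1) → F))
    (hAdisj : ∀ a b, a ≠ b → Disjoint (A a) (A b))
    (hAcover : (⋃ a, A a) = Set.univ)
    (hAcard : ∀ a, (A a).ncard = q ^ (q ^ m1 - 1))
    (hAdist : ∀ a, ∀ u ∈ A a, ∀ v ∈ A a, u ≠ v → 2 ≤ hammingDist u v)
    (hAdist2 : ∀ a, ∃ u ∈ A a, ∃ v ∈ A a, u ≠ v ∧ hammingDist u v = 2)
    (B : Set (Fin (q ^ m2) → F))
    (hBcard : B.ncard = q ^ (q ^ m2 - 1))
    (hBdist : ∀ u ∈ B, ∀ v ∈ B, u ≠ v → 2 ≤ hammingDist u v)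
    (hBdist2 : ∃ u ∈ B, ∃ v ∈ B, u ≠ v ∧ hammingDist u v = 2) :
    (({w : Fin (q ^ (m1 + m2)) → F |
        ∃ v ∈ B, ∀ i : Fin (q ^ m2), block q m1 m2 w i ∈ A (v i)}).ncard
        = q ^ (q ^ (m1 + m2) - 1)) ∧
    (∀ u ∈ {w : Fin (q ^ (m1 + m2)) → F |
        ∃ v ∈ B, ∀ i : Fin (q ^ m2), block q m1 m2 w i ∈ A (v i)},
      ∀ u' ∈ {w : Fin (q ^ (m1 + m2)) → F |
        ∃ v ∈ B, ∀ i : Fin (q ^ m2), block q m1 m2 w i ∈ A (v i)},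
        u ≠ u' → 2 ≤ hammingDist u u') ∧
    (∃ u ∈ {w : Fin (q ^ (m1 + m2)) → F |
        ∃ v ∈ B, ∀ i : Fin (q ^ m2), block q m1 m2 w i ∈ A (v i)},
      ∃ u' ∈ {w : Fin (q ^ (m1 + m2)) → F |
        ∃ v ∈ B, ∀ i : Fin (q ^ m2), block q m1 m2 w i ∈ A (v i)},
        u ≠ u' ∧ hammingDist u u' = 2) := by
  classical
  -- q is positive
  have hq : 1 ≤ q := by
    by_contra h
    have hq0 : q = 0 := by omega
    have hFe : IsEmpty F := Fintype.card_eq_zero_iff.mp (by omega)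
    have h0 : (⋃ a, A a) = (∅ : Set (Fin (q ^ m1) → F)) := Set.iUnion_of_empty A
    rw [hAcover] at h0
    have hfe : IsEmpty (Fin (q ^ m1)) := by
      have : q ^ m1 = 0 := by
        rw [hq0]; exact zero_pow (by omega)
      rw [this]; infer_instance
    have hne : (Set.univ : Set (Fin (q ^ m1) → F)).Nonempty :=
      ⟨fun j => isEmptyElim j, trivial⟩
    rw [h0] at hne
    exact Set.not_nonempty_empty hne
  have ha1 : 1 ≤ q ^ m1 := Nat.one_le_pow _ _ (by omega)
  have hb1 : 1 ≤ q ^ m2 := Nat.one_le_pow _ _ (by omega)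
  set C := {w : Fin (q ^ (m1 + m2)) → F |
      ∃ v ∈ B, ∀ i : Fin (q ^ m2), block q m1 m2 w i ∈ A (v i)} with hCdef
  set D : Set (Fin (q ^ m2) → Fin (q ^ m1) → F) :=
      {f | ∃ v ∈ B, ∀ i, f i ∈ A (v i)} with hDdef
  have hCD : C = (blocksE q m1 m2 F) ⁻¹' D := by
    ext w
    simp only [hCdef, hDdef, Set.mem_setOf_eq, Set.mem_preimage]
    constructor
    · rintro ⟨v, hv, hblk⟩
      exact ⟨v, hv, fun i => by rw [← block_eq]; exact hblk i⟩
    · rintro ⟨v, hv, hblk⟩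
      exact ⟨v, hv, fun i => by rw [block_eq]; exact hblk i⟩
  have hCcard : C.ncard = D.ncard := by
    rw [hCD]
    rw [show (blocksE q m1 m2 F) ⁻¹' D = (blocksE q m1 m2 F).symm '' D by
      rw [Equiv.image_eq_preimage_symm, Equiv.symm_symm]]
    exact Set.ncard_image_of_injective D (blocksE q m1 m2 F).symm.injective
  have hBfin : B.Finite := Set.toFinite B
  have hDfin : D.Finite := Set.toFinite D
  have hAfin : ∀ a, (A a).Finite := fun a => Set.toFinite _
  set g : (Fin (q ^ m2) → F) → Finset (Fin (q ^ m2) → Fin (q ^ m1) → F) :=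
    fun v => Fintype.piFinset (fun i => (hAfin (v i)).toFinset) with hg
  have hDF : hDfin.toFinset = hBfin.toFinset.biUnion g := by
    ext f
    simp only [Set.Finite.mem_toFinset, Finset.mem_biUnion, hDdef, Set.mem_setOf_eq, hg,
      Fintype.mem_piFinset]
  have hgdisj : ∀ v ∈ hBfin.toFinset, ∀ v' ∈ hBfin.toFinset, v ≠ v' → Disjoint (g v) (g v') := by
    intro v _ v' _ hne
    rw [Finset.disjoint_left]
    intro f hf hf'
    obtain ⟨i, hi⟩ : ∃ i, v i ≠ v' i := by
      by_contra hco; push_neg at hco; exact hne (funext hco)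
    have h1 : f i ∈ A (v i) := by
      have := Fintype.mem_piFinset.mp hf i
      rwa [Set.Finite.mem_toFinset] at this
    have h2 : f i ∈ A (v' i) := by
      have := Fintype.mem_piFinset.mp hf' i
      rwa [Set.Finite.mem_toFinset] at this
    exact Set.disjoint_left.mp (hAdisj _ _ hi) h1 h2
  have hDcard : D.ncard = q ^ (q ^ m2 - 1) * (q ^ (q ^ m1 - 1)) ^ (q ^ m2) := by
    rw [Set.ncard_eq_toFinset_card D hDfin, hDF, Finset.card_biUnion hgdisj]
    have hgc : ∀ v ∈ hBfin.toFinset, (g v).card = (q ^ (q ^ m1 - 1)) ^ (q ^ m2) := by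
      intro v _
      rw [hg]
      simp only []
      rw [Fintype.card_piFinset]
      have hc : ∀ i : Fin (q ^ m2), ((hAfin (v i)).toFinset).card = q ^ (q ^ m1 - 1) := by
        intro i
        rw [← Set.ncard_eq_toFinset_card]
        exact hAcard _
      rw [Finset.prod_congr rfl (fun i _ => hc i), Finset.prod_const, Finset.card_univ,
        Fintype.card_fin]
    rw [Finset.sum_congr rfl hgc, Finset.sum_const, ← Set.ncard_eq_toFinset_card B hBfin,
      hBcard, smul_eq_mul]
  have hpow : q ^ (q ^ m2 - 1) * (q ^ (q ^ m1 - 1)) ^ (q ^ m2) = q ^ (q ^ (m1 + m2) - 1) := by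
    rw [← pow_mul, ← pow_add]
    congr 1
    have hab : q ^ m1 * q ^ m2 = q ^ (m1 + m2) := (pow_add q m1 m2).symm
    have h1 : (q ^ m1 - 1) * q ^ m2 = q ^ m1 * q ^ m2 - q ^ m2 := by
      rw [Nat.sub_mul, one_mul]
    have h2 : q ^ m2 ≤ q ^ m1 * q ^ m2 := Nat.le_mul_of_pos_left _ (by omega)
    omega
  refine ⟨by rw [hCcard, hDcard]; exact hpow, ?_, ?_⟩
  · -- minimum distance at least 2
    intro u hu u' hu' hne
    by_contra hlt
    push_neg at hlt
    have h1 : hammingDist u u' = 1 := by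
      have := hammingDist_pos.mpr hne
      omega
    obtain ⟨v, hv, hblk⟩ := hu
    obtain ⟨v', hv', hblk'⟩ := hu'
    rw [hd_sum] at h1
    set d := fun i => hammingDist (block q m1 m2 u i) (block q m1 m2 u' i) with hd
    have hs1 : ∑ j, d j = 1 := h1
    obtain ⟨i0, hi0⟩ : ∃ i0, d i0 ≠ 0 := by
      by_contra hco; push_neg at hco
      simp only [hco, Finset.sum_const_zero] at h1
      omega
    have hzero : ∀ i, i ≠ i0 → d i = 0 := by
      intro i hne2
      by_contra hdi
      have hsum : d i0 + d i ≤ ∑ j, d j := by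
        rw [← Finset.sum_pair (Ne.symm hne2)]
        exact Finset.sum_le_sum_of_subset (Finset.subset_univ _)
      rw [hs1] at hsum
      omega
    have hbeq : ∀ i, i ≠ i0 → block q m1 m2 u i = block q m1 m2 u' i :=
      fun i hi => hammingDist_eq_zero.mp (hzero i hi)
    have hveq : ∀ i, i ≠ i0 → v i = v' i := by
      intro i hi
      by_contra hvv
      exact Set.disjoint_left.mp (hAdisj _ _ hvv) (hblk i)
        (by rw [hbeq i hi]; exact hblk' i)
    by_cases hvv' : v = v'
    · have hbne : block q m1 m2 u i0 ≠ block q m1 m2 u' i0 :=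
        fun h => hi0 (hammingDist_eq_zero.mpr h)
      have h2 : 2 ≤ d i0 := hAdist (v i0) _ (hblk i0) _ (by rw [hvv']; exact hblk' i0) hbne
      have hle : d i0 ≤ 1 := by
        calc d i0 ≤ ∑ j, d j :=
              Finset.single_le_sum (fun _ _ => Nat.zero_le _) (Finset.mem_univ _)
          _ = 1 := hs1
      omega
    · have hvd : hammingDist v v' ≤ 1 := by
        have hsub : (Finset.univ.filter fun i => v i ≠ v' i) ⊆ {i0} := by
          intro i hi
          simp only [Finset.mem_filter, Finset.mem_univ, true_and] at hi
          simp only [Finset.mem_singleton]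
          by_contra hc
          exact hi (hveq i hc)
        calc hammingDist v v' = (Finset.univ.filter fun i => v i ≠ v' i).card := rfl
          _ ≤ ({i0} : Finset _).card := Finset.card_le_card hsub
          _ = 1 := Finset.card_singleton i0
      have := hBdist v hv v' hv' hvv'
      omega
  · -- a pair at distance exactly 2
    have hBne : B.Nonempty := Set.nonempty_of_ncard_ne_zero
      (by rw [hBcard]; exact (pow_pos (show 0 < q by omega) _).ne')
    obtain ⟨vB, hvB⟩ := hBne
    have hAne : ∀ a, (A a).Nonempty := fun a => Set.nonempty_of_ncard_ne_zero
      (by rw [hAcard]; exact (pow_pos (show 0 < q by omega) _).ne')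
    set i0 : Fin (q ^ m2) := ⟨0, by omega⟩ with hi0def
    obtain ⟨u1, hu1, u2, hu2, hune, hud⟩ := hAdist2 (vB i0)
    set f1 : Fin (q ^ m2) → Fin (q ^ m1) → F :=
      fun i => if i = i0 then u1 else (hAne (vB i)).choose with hf1
    set f2 : Fin (q ^ m2) → Fin (q ^ m1) → F :=
      fun i => if i = i0 then u2 else (hAne (vB i)).choose with hf2
    set w1 := (blocksE q m1 m2 F).symm f1 with hw1
    set w2 := (blocksE q m1 m2 F).symm f2 with hw2
    have hb1 : ∀ i, block q m1 m2 w1 i = f1 i := by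
      intro i; rw [block_eq, hw1, Equiv.apply_symm_apply]
    have hb2 : ∀ i, block q m1 m2 w2 i = f2 i := by
      intro i; rw [block_eq, hw2, Equiv.apply_symm_apply]
    refine ⟨w1, ⟨vB, hvB, ?_⟩, w2, ⟨vB, hvB, ?_⟩, ?_, ?_⟩
    · intro i; rw [hb1, hf1]
      by_cases h : i = i0
      · subst h; simpa using hu1
      · simp only [h, if_neg, if_false]
        exact (hAne (vB i)).choose_spec
    · intro i; rw [hb2, hf2]
      by_cases h : i = i0
      · subst h; simpa using hu2
      · simp only [h, if_neg, if_false]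
        exact (hAne (vB i)).choose_spec
    · intro h
      have hf : f1 = f2 := (blocksE q m1 m2 F).symm.injective h
      have := congrFun hf i0
      simp only [hf1, hf2, if_pos rfl] at this
      exact hune this
    · rw [hd_sum, Finset.sum_eq_single i0]
      · rw [hb1, hb2]
        simp only [hf1, hf2, if_pos rfl]
        exact hud
      · intro i _ hi
        rw [hb1, hb2]
        simp only [hf1, hf2, if_neg hi]
        exact hammingDist_self _
      · intro h; exact absurd (Finset.mem_univ i0) h
end

section
/- Let A^1, ..., A^q partition F_q^{q^{m_1}} into distance-2 MDS codes, each A^k partitioned into q^{m_1} codes A^k_1, ..., A^k_{q^{m_1}} with parameters (q^{m_1}, q^{q^{m_1}-m_1-1}, 3)_q (q ≥ 3), let B be a code with parameters (q^{m_2}, q^{q^{m_2}-m_2-1}, 3)_q, and for each v ∈ B let q_v be a (q^{m_2}-1)-ary quasigroup of order q^{m_1} on the index set {1,...,q^{m_1}}. Then the code C = {(u_1|...|u_{q^{m_2}}) : u_i ∈ A^{v_i}_{j_i}, v ∈ B, j_1 = q_v(j_2,...,j_{q^{m_2}})} has length q^{m_1+m_2}, size q^{q^{m_1+m_2} - (m_1+m_2)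 - 1}, and minimum distance at least 3. -/
/-- `g` is an `n`-ary quasigroup operation: bijective in each argument. -/
def IsQuasigroupOp {S : Type*} {n : ℕ} (g : (Fin n → S) → S) : Prop :=
  ∀ (i : Fin n) (x : Fin n → S), Function.Bijective (fun a => g (Function.update x i a))

/-!
Read a word of length `q^(m₁+m₂)` as `q^m₂` blocks of length `q^m₁`. Since the `A^a` partition
the space and each `A^a` is partitioned by the `A^a_j`, every block determines its label `(a, j)`.
Hence a codeword amounts to a label pair `(v, j)`, with `v ∈ B` and `j` in the graph
`j₀ = q_v(j₁, …)`, together with a free choice of one word of `A^{v_i}_{j_i}` in every block; this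
gives `|C| = |B| · (q^m₁)^(q^m₂-1) · |A^a_j|^(q^m₂)`. Two distinct codewords either have different
`v`, and then differ in at least three blocks; or the same `v` and different `j`, and then differ
in at least two blocks (the graph of a quasigroup has distance 2), each at distance at least 2
inside one MDS code `A^a`; or the same labels, and then some block differs inside one `A^a_j`.
-/

open Finset Function

section Hamming

variable {ι ι' κ β : Type*} [Fintype ι] [DecidableEq β]

theorem hammingDist_comp_equiv [Fintype ι'] (e : ι ≃ ι') (x y : ι' → β) :
    hammingDist (x ∘ e) (y ∘ e) = hammingDist x y := by
  simp only [hammingDist]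
  exact card_equiv e (by simp)

theorem hammingDist_eq_sum_hammingDist_curry [Fintype κ] (x y : ι × κ → β) :
    hammingDist x y = ∑ i, hammingDist (curry x i) (curry y i) := by
  simp only [hammingDist, card_filter, Fintype.sum_prod_type]; rfl

theorem mul_hammingDist_le_sum {γ : Type*} [DecidableEq γ] {f g : ι → γ} {D : ι → ℕ} {d : ℕ}
    (h : ∀ i, f i ≠ g i → d ≤ D i) : d * hammingDist f g ≤ ∑ i, D i :=
  calc d * hammingDist f g = ∑ i with f i ≠ g i, d := by simp [hammingDist, mul_comm]
    _ ≤ ∑ i with f i ≠ g i, D i := sum_le_sum fun i hi => h i (mem_filter.mp hi).2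
    _ ≤ ∑ i, D i := sum_le_sum_of_subset (filter_subset _ _)

theorem hammingDist_fin_cons {n : ℕ} (a b : β) (x y : Fin n → β) :
    hammingDist (Fin.cons a x : Fin (n + 1) → β) (Fin.cons b y) =
      (if a = b then 0 else 1) + hammingDist x y := by
  simp only [hammingDist, card_filter, Fin.sum_univ_succ, Fin.cons_zero, Fin.cons_succ, ite_not]

theorem exists_forall_ne_eq_of_hammingDist_eq_one {x y : ι → β} (h : hammingDist x y = 1) :
    ∃ s, ∀ r ≠ s, x r = y r := by
  obtain ⟨s, hs⟩ := card_eq_one.mp h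
  refine ⟨s, fun r hr => ?_⟩
  by_contra hne
  have : r ∈ ({s} : Finset ι) := hs ▸ mem_filter.mpr ⟨mem_univ r, hne⟩
  exact hr (mem_singleton.mp this)

theorem hammingDist_eq_sum_hammingDist_blocks [Fintype ι'] [Fintype κ] (e : ι × κ ≃ ι')
    (x y : ι' → β) :
    hammingDist x y = ∑ i, hammingDist (fun k => x (e (i, k))) (fun k => y (e (i, k))) := by
  rw [← hammingDist_comp_equiv e, hammingDist_eq_sum_hammingDist_curry]
  rfl

end Hamming

namespace IsQuasigroupOp

variable {S : Type*} {n : ℕ} {g : (Fin n → S) → S}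

theorem eq_of_apply_eq (hg : IsQuasigroupOp g) {x y : Fin n → S} (hxy : g x = g y) (s : Fin n)
    (h : ∀ r ≠ s, x r = y r) : x = y := by
  have hy : y = update x s (y s) := eq_update_iff.mpr ⟨rfl, fun r hr => (h r hr).symm⟩
  have hxs : x s = y s := (hg s x).injective <| by
    simpa only [update_eq_self, ← hy] using hxy
  rw [hy, ← hxs, update_eq_self]

theorem two_le_hammingDist_cons [DecidableEq S] (hg : IsQuasigroupOp g) {t t' : Fin n → S}
    (h : t ≠ t') : 2 ≤ hammingDist (Fin.cons (g t) t : Fin (n + 1) → S) (Fin.cons (g t') t') := by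
  rw [hammingDist_fin_cons]
  have ht : 1 ≤ hammingDist t t' := hammingDist_pos.mpr h
  rcases ht.eq_or_lt with hone | htwo
  · obtain ⟨s, hs⟩ := exists_forall_ne_eq_of_hammingDist_eq_one hone.symm
    have : g t ≠ g t' := fun hgt => h (hg.eq_of_apply_eq hgt s hs)
    simp [this, ← hone]
  · split <;> omega

end IsQuasigroupOp

section PhelpsCode

variable {ι κ F J : Type*}

def phelpsCode (Asub : F → J → Set (κ → F)) (L : Set ((ι → F) × (ι → J))) :
    Set (ι → κ → F) :=
  {x | ∃ p ∈ L, ∀ i, x i ∈ Asub (p.1 i) (p.2 i)}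

theorem pairwise_disjoint_uncurry_of_subset {α β γ : Type*} {A : α → Set γ} {S : α → β → Set γ}
    (hA : Pairwise (Disjoint on A)) (hS : ∀ a, Pairwise (Disjoint on S a))
    (hSA : ∀ a b, S a b ⊆ A a) : Pairwise (Disjoint on uncurry S) := by
  rintro ⟨a, b⟩ ⟨a', b'⟩ h
  by_cases ha : a = a'
  · subst ha
    exact hS a fun hb => h (congrArg _ hb)
  · exact (hA ha).mono (hSA a b) (hSA a' b')

variable {Asub : F → J → Set (κ → F)} {L : Set ((ι → F) × (ι → J))}

theorem ncard_phelpsCode [Fintype ι] [Finite κ] [Finite F] [Finite J]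
    (hdisj : Pairwise (Disjoint on uncurry Asub)) {s : ℕ}
    (hs : ∀ a j, (Asub a j).ncard = s) :
    (phelpsCode Asub L).ncard = L.ncard * s ^ Fintype.card ι := by
  let f : (Σ p : L, ∀ i, Asub (p.1.1 i) (p.1.2 i)) → phelpsCode Asub L :=
    fun x => ⟨fun i => x.2 i, x.1, x.1.2, fun i => (x.2 i).2⟩
  have hf : f.Bijective := by
    constructor
    · rintro ⟨⟨p, hp⟩, x⟩ ⟨⟨p', hp'⟩, x'⟩ h
      have hx : ∀ i, (x i : κ → F) = x' i := fun i => congrFun (congrArg Subtype.val h) i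
      have hlabel : ∀ i, (p.1 i, p.2 i) = (p'.1 i, p'.2 i) := fun i =>
        hdisj.eq ((Set.not_disjoint_iff.mpr ⟨x i, (x i).2, hx i ▸ (x' i).2⟩))
      obtain rfl : p = p' := Prod.ext (funext fun i => congrArg Prod.fst (hlabel i))
        (funext fun i => congrArg Prod.snd (hlabel i))
      obtain rfl : x = x' := funext fun i => Subtype.ext (hx i)
      rfl
    · rintro ⟨y, p, hp, hy⟩
      exact ⟨⟨⟨p, hp⟩, fun i => ⟨y i, hy i⟩⟩, rfl⟩
  have := Fintype.ofFinite L
  rw [← Nat.card_coe_set_eq, ← Nat.card_eq_of_bijective f hf, Nat.card_sigma]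
  simp only [Nat.card_pi, Nat.card_coe_set_eq, hs, prod_const, card_univ, sum_const, smul_eq_mul,
    ← Nat.card_eq_fintype_card]

theorem three_le_sum_hammingDist_of_mem_phelpsCode [Fintype ι] [Fintype κ] [DecidableEq F]
    [DecidableEq J] {A : F → Set (κ → F)}
    (hdisj : Pairwise (Disjoint on uncurry Asub)) (hsub : ∀ a j, Asub a j ⊆ A a)
    (hA : ∀ a, ∀ u ∈ A a, ∀ u' ∈ A a, u ≠ u' → 2 ≤ hammingDist u u')
    (hAsub : ∀ a j, ∀ u ∈ Asub a j, ∀ u' ∈ Asub a j, u ≠ u' → 3 ≤ hammingDist u u')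
    (hL₁ : ∀ p ∈ L, ∀ p' ∈ L, p.1 ≠ p'.1 → 3 ≤ hammingDist p.1 p'.1)
    (hL₂ : ∀ p ∈ L, ∀ p' ∈ L, p.1 = p'.1 → p.2 ≠ p'.2 → 2 ≤ hammingDist p.2 p'.2)
    {x y : ι → κ → F} (hx : x ∈ phelpsCode Asub L) (hy : y ∈ phelpsCode Asub L) (hxy : x ≠ y) :
    3 ≤ ∑ i, hammingDist (x i) (y i) := by
  obtain ⟨p, hp, hxp⟩ := hx
  obtain ⟨p', hp', hyp'⟩ := hy
  have hne : ∀ i, (p.1 i, p.2 i) ≠ (p'.1 i, p'.2 i) → x i ≠ y i := fun i h =>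
    (hdisj h).ne_of_mem (hxp i) (hyp' i)
  by_cases hv : p.1 = p'.1
  · by_cases hj : p.2 = p'.2
    · have hpp' : p = p' := Prod.ext hv hj
      subst hpp'
      calc 3 = 3 * 1 := rfl
        _ ≤ 3 * hammingDist x y := Nat.mul_le_mul_left 3 (hammingDist_pos.mpr hxy)
        _ ≤ _ := mul_hammingDist_le_sum fun i h => hAsub _ _ _ (hxp i) _ (hyp' i) h
    · calc 3 ≤ 2 * 2 := by norm_num
        _ ≤ 2 * hammingDist p.2 p'.2 := Nat.mul_le_mul_left 2 (hL₂ p hp p' hp' hv hj)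
        _ ≤ _ := mul_hammingDist_le_sum fun i h => hA (p.1 i) _ (hsub _ _ (hxp i)) _
              (hv ▸ hsub _ _ (hyp' i)) (hne i fun h' => h (congrArg Prod.snd h'))
  · calc 3 ≤ 1 * hammingDist p.1 p'.1 := by rw [one_mul]; exact hL₁ p hp p' hp' hv
      _ ≤ _ := mul_hammingDist_le_sum fun i h =>
          hammingDist_pos.mpr (hne i fun h' => h (congrArg Prod.fst h'))

end PhelpsCode

section QuasigroupLabels

variable {ι F J : Type*} {n : ℕ}

def quasigroupLabels (B : Set (ι → F)) (σ : Fin (n + 1) ≃ ι) (Q : (ι → F) → (Fin n → J) → J) :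
    Set ((Fin (n + 1) → F) × (Fin (n + 1) → J)) :=
  Set.range fun p : B × (Fin n → J) => (p.1.1 ∘ σ, Fin.cons (Q p.1 p.2) p.2)

variable {B : Set (ι → F)} {σ : Fin (n + 1) ≃ ι} {Q : (ι → F) → (Fin n → J) → J}

theorem ncard_quasigroupLabels : (quasigroupLabels B σ Q).ncard = B.ncard * Nat.card J ^ n := by
  rw [quasigroupLabels, Set.ncard_range_of_injective, Nat.card_prod, Nat.card_coe_set_eq,
    Nat.card_fun, Nat.card_fin]
  rintro ⟨v, t⟩ ⟨v', t'⟩ h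
  simp only [Prod.mk.injEq, Fin.cons_inj] at h
  obtain ⟨hv, -, ht⟩ := h
  obtain rfl : v = v' := Subtype.ext (σ.surjective.injective_comp_right hv)
  rw [ht]

theorem mem_phelpsCode_quasigroupLabels {κ : Type*} {Asub : F → J → Set (κ → F)}
    {x : Fin (n + 1) → κ → F} :
    x ∈ phelpsCode Asub (quasigroupLabels B σ Q) ↔
      ∃ v ∈ B, ∃ j : Fin (n + 1) → J, j 0 = Q v (fun t => j t.succ) ∧
        ∀ i, x i ∈ Asub (v (σ i)) (j i) := by
  constructor
  · rintro ⟨_, ⟨⟨⟨v, hv⟩, t⟩, rfl⟩, hx⟩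
    exact ⟨v, hv, Fin.cons (Q v t) t, by simp only [Fin.cons_zero, Fin.cons_succ], hx⟩
  · rintro ⟨v, hv, j, hj, hx⟩
    have hcons : Fin.cons (Q v (Fin.tail j)) (Fin.tail j) = j := by
      change Fin.cons (Q v fun t => j t.succ) (Fin.tail j) = j
      rw [← hj, Fin.cons_self_tail]
    exact ⟨_, ⟨⟨⟨v, hv⟩, Fin.tail j⟩, rfl⟩, hcons ▸ hx⟩

theorem le_hammingDist_fst_of_mem_quasigroupLabels [Fintype ι] [DecidableEq F] {d : ℕ}
    (hB : ∀ v ∈ B, ∀ v' ∈ B, v ≠ v' → d ≤ hammingDist v v') {p p'}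
    (hp : p ∈ quasigroupLabels B σ Q) (hp' : p' ∈ quasigroupLabels B σ Q) (h : p.1 ≠ p'.1) :
    d ≤ hammingDist p.1 p'.1 := by
  obtain ⟨⟨⟨v, hv⟩, t⟩, rfl⟩ := hp
  obtain ⟨⟨⟨v', hv'⟩, t'⟩, rfl⟩ := hp'
  rw [hammingDist_comp_equiv]
  exact hB v hv v' hv' fun hvv' => h (by simp [hvv'])

theorem two_le_hammingDist_snd_of_mem_quasigroupLabels [DecidableEq J]
    (hQ : ∀ v ∈ B, IsQuasigroupOp (Q v)) {p p'}
    (hp : p ∈ quasigroupLabels B σ Q) (hp' : p' ∈ quasigroupLabels B σ Q) (h₁ : p.1 = p'.1)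
    (h₂ : p.2 ≠ p'.2) : 2 ≤ hammingDist p.2 p'.2 := by
  obtain ⟨⟨⟨v, hv⟩, t⟩, rfl⟩ := hp
  obtain ⟨⟨⟨v', hv'⟩, t'⟩, rfl⟩ := hp'
  obtain rfl : v = v' := σ.surjective.injective_comp_right h₁
  exact (hQ v hv).two_le_hammingDist_cons fun htt' : t = t' => h₂ (htt' ▸ rfl)

end QuasigroupLabels

theorem pow_sub_sub_one_mul_pow_mul_pow_sub_sub_one {q : ℕ} (hq : 2 ≤ q) (m1 m2 n : ℕ)
    (hn : n + 1 = q ^ m2) :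
    q ^ (q ^ m2 - m2 - 1) * (q ^ m1) ^ n * (q ^ (q ^ m1 - m1 - 1)) ^ (n + 1) =
      q ^ (q ^ (m1 + m2) - (m1 + m2) - 1) := by
  rw [← pow_mul, ← pow_mul, ← pow_add, ← pow_add]
  congr 1
  have h1 : m1 + 1 ≤ q ^ m1 := Nat.lt_pow_self (by omega)
  have h2 : m2 + 1 ≤ q ^ m2 := Nat.lt_pow_self (by omega)
  have h12 : m1 + m2 + 1 ≤ q ^ (m1 + m2) := Nat.lt_pow_self (by omega)
  have hn' : (q : ℤ) ^ m2 = n + 1 := by exact_mod_cast hn.symm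
  simp only [Nat.sub_sub]
  zify [h1, h2, h12]
  rw [pow_add, hn']
  ring

section Blocks

variable {q m1 m2 n : ℕ}

def blockIndexEquiv (hn : n + 1 = q ^ m2) : Fin (n + 1) × Fin (q ^ m1) ≃ Fin (q ^ (m1 + m2)) :=
  ((finCongr hn).prodCongr (Equiv.refl _)).trans (finProdFinEquiv.trans (finCongr (by ring)))

def blockEquiv (F : Type*) (hn : n + 1 = q ^ m2) :
    (Fin (q ^ (m1 + m2)) → F) ≃ (Fin (n + 1) → Fin (q ^ m1) → F) :=
  ((blockIndexEquiv hn).arrowCongr (Equiv.refl F)).symm.trans (Equiv.curry _ _ F)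

theorem blockEquiv_apply {F : Type*} (hn : n + 1 = q ^ m2) (w : Fin (q ^ (m1 + m2)) → F)
    (i : Fin (n + 1)) : blockEquiv F hn w i = block q m1 m2 w (Fin.cast hn i) :=
  rfl

theorem setOf_block_mem_eq_preimage_phelpsCode {F : Type*} (hn : n + 1 = q ^ m2)
    {B : Set (Fin (q ^ m2) → F)} {Q : (Fin (q ^ m2) → F) → (Fin n → Fin (q ^ m1)) → Fin (q ^ m1)}
    {Asub : F → Fin (q ^ m1) → Set (Fin (q ^ m1) → F)} :
    {w : Fin (q ^ (m1 + m2)) → F |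
        ∃ v ∈ B, ∃ j : Fin (n + 1) → Fin (q ^ m1),
          j 0 = Q v (fun t : Fin n => j t.succ) ∧
          ∀ i : Fin (n + 1),
            block q m1 m2 w (Fin.cast hn i) ∈ Asub (v (Fin.cast hn i)) (j i)} =
      blockEquiv F hn ⁻¹' phelpsCode Asub (quasigroupLabels B (finCongr hn) Q) := by
  ext w
  simp only [Set.mem_preimage, mem_phelpsCode_quasigroupLabels, blockEquiv_apply, finCongr_apply,
    Set.mem_ofPred_eq]

end Blocks

theorem product_RM_like_general (q m1 m2 : ℕ) (hq : 3 ≤ q)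
    (n2 : ℕ) (hn2 : n2 + 1 = q ^ m2)
    (F : Type*) [Fintype F] [DecidableEq F]
    -- A partition of F_q^{q^{m₁}} into distance-2 MDS codes
    (A : F → Set (Fin (q ^ m1) → F))
    (hAdisj : ∀ a b, a ≠ b → Disjoint (A a) (A b))
    (hAdist : ∀ a, ∀ u ∈ A a, ∀ v ∈ A a, u ≠ v → 2 ≤ hammingDist u v)
    -- each A a is partitioned into q^{m₁} codes with parameters (q^{m₁}, q^{q^{m₁}-m₁-1}, 3)
    (Asub : F → Fin (q ^ m1) → Set (Fin (q ^ m1) → F))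
    (hAsubdisj : ∀ a, ∀ j j', j ≠ j' → Disjoint (Asub a j) (Asub a j'))
    (hAsubcover : ∀ a, (⋃ j, Asub a j) = A a)
    (hAsubcard : ∀ a j, (Asub a j).ncard = q ^ (q ^ m1 - m1 - 1))
    (hAsubdist : ∀ a j, ∀ u ∈ Asub a j, ∀ v ∈ Asub a j, u ≠ v → 3 ≤ hammingDist u v)
    -- B is a code with parameters (q^{m₂}, q^{q^{m₂}-m₂-1}, 3)
    (B : Set (Fin (q ^ m2) → F))
    (hBcard : B.ncard = q ^ (q ^ m2 - m2 - 1))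
    (hBdist : ∀ u ∈ B, ∀ v ∈ B, u ≠ v → 3 ≤ hammingDist u v)
    -- for each codeword v of B, a (q^{m₂}-1)-ary quasigroup on the index set
    (Q : (Fin (q ^ m2) → F) → (Fin n2 → Fin (q ^ m1)) → Fin (q ^ m1))
    (hQ : ∀ v ∈ B, IsQuasigroupOp (Q v)) :
    (({w : Fin (q ^ (m1 + m2)) → F |
        ∃ v ∈ B, ∃ j : Fin (n2 + 1) → Fin (q ^ m1),
          j 0 = Q v (fun t : Fin n2 => j t.succ) ∧
          ∀ i : Fin (n2 + 1),
            block q m1 m2 w (Fin.cast hn2 i) ∈ Asub (v (Fin.cast hn2 i)) (j i)}).ncard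
        = q ^ (q ^ (m1 + m2) - (m1 + m2) - 1)) ∧
    (∀ u ∈ {w : Fin (q ^ (m1 + m2)) → F |
        ∃ v ∈ B, ∃ j : Fin (n2 + 1) → Fin (q ^ m1),
          j 0 = Q v (fun t : Fin n2 => j t.succ) ∧
          ∀ i : Fin (n2 + 1),
            block q m1 m2 w (Fin.cast hn2 i) ∈ Asub (v (Fin.cast hn2 i)) (j i)},
      ∀ u' ∈ {w : Fin (q ^ (m1 + m2)) → F |
        ∃ v ∈ B, ∃ j : Fin (n2 + 1) → Fin (q ^ m1),
          j 0 = Q v (fun t : Fin n2 => j t.succ) ∧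
          ∀ i : Fin (n2 + 1),
            block q m1 m2 w (Fin.cast hn2 i) ∈ Asub (v (Fin.cast hn2 i)) (j i)},
        u ≠ u' → 3 ≤ hammingDist u u') := by
  have hsub : ∀ a j, Asub a j ⊆ A a := fun a j => hAsubcover a ▸ Set.subset_iUnion _ j
  have hdisj := pairwise_disjoint_uncurry_of_subset hAdisj hAsubdisj hsub
  rw [setOf_block_mem_eq_preimage_phelpsCode hn2]
  refine ⟨?_, fun u hu u' hu' hne => ?_⟩
  · rw [Set.ncard_preimage_of_injective_subset_range (blockEquiv F hn2).injective (by simp),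
      ncard_phelpsCode hdisj hAsubcard, ncard_quasigroupLabels, hBcard, Nat.card_fin,
      Fintype.card_fin]
    exact pow_sub_sub_one_mul_pow_mul_pow_sub_sub_one (by omega) m1 m2 n2 hn2
  · rw [hammingDist_eq_sum_hammingDist_blocks (blockIndexEquiv hn2)]
    exact three_le_sum_hammingDist_of_mem_phelpsCode hdisj hsub hAdist hAsubdist
      (fun _ hp _ hp' => le_hammingDist_fst_of_mem_quasigroupLabels hBdist hp hp')
      (fun _ hp _ hp' => two_le_hammingDist_snd_of_mem_quasigroupLabels hQ hp hp')
      hu hu' ((blockEquiv F hn2).injective.ne hne)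

/-- Phelps-type construction of Reed–Muller-like codes of length `q^{m₁+m₂}` and order
`(q-1)(m₁+m₂) - 2` (`q ≥ 3`): the resulting code has `q^{q^{m₁+m₂}-(m₁+m₂)-1}`
codewords and minimum distance at least 3. -/
theorem product_RM_like (q m1 m2 : ℕ) (hq : 3 ≤ q) (hm1 : 1 ≤ m1) (hm2 : 1 ≤ m2)
    (n2 : ℕ) (hn2 : n2 + 1 = q ^ m2)
    (F : Type*) [Fintype F] [DecidableEq F] (hF : Fintype.card F = q)
    -- A partition of F_q^{q^{m₁}} into distance-2 MDS codes
    (A : F → Set (Fin (q ^ m1) → F))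
    (hAdisj : ∀ a b, a ≠ b → Disjoint (A a) (A b))
    (hAcover : (⋃ a, A a) = Set.univ)
    (hAcard : ∀ a, (A a).ncard = q ^ (q ^ m1 - 1))
    (hAdist : ∀ a, ∀ u ∈ A a, ∀ v ∈ A a, u ≠ v → 2 ≤ hammingDist u v)
    -- each A a is partitioned into q^{m₁} codes with parameters (q^{m₁}, q^{q^{m₁}-m₁-1}, 3)
    (Asub : F → Fin (q ^ m1) → Set (Fin (q ^ m1) → F))
    (hAsubdisj : ∀ a, ∀ j j', j ≠ j' → Disjoint (Asub a j) (Asub a j'))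
    (hAsubcover : ∀ a, (⋃ j, Asub a j) = A a)
    (hAsubcard : ∀ a j, (Asub a j).ncard = q ^ (q ^ m1 - m1 - 1))
    (hAsubdist : ∀ a j, ∀ u ∈ Asub a j, ∀ v ∈ Asub a j, u ≠ v → 3 ≤ hammingDist u v)
    (hAsubdist3 : ∀ a j, ∃ u ∈ Asub a j, ∃ v ∈ Asub a j, u ≠ v ∧ hammingDist u v = 3)
    -- B is a code with parameters (q^{m₂}, q^{q^{m₂}-m₂-1}, 3)
    (B : Set (Fin (q ^ m2) → F))
    (hBcard : B.ncard = q ^ (q ^ m2 - m2 - 1))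
    (hBdist : ∀ u ∈ B, ∀ v ∈ B, u ≠ v → 3 ≤ hammingDist u v)
    (hBdist3 : ∃ u ∈ B, ∃ v ∈ B, u ≠ v ∧ hammingDist u v = 3)
    -- for each codeword v of B, a (q^{m₂}-1)-ary quasigroup on the index set
    (Q : (Fin (q ^ m2) → F) → (Fin n2 → Fin (q ^ m1)) → Fin (q ^ m1))
    (hQ : ∀ v ∈ B, IsQuasigroupOp (Q v)) :
    (({w : Fin (q ^ (m1 + m2)) → F |
        ∃ v ∈ B, ∃ j : Fin (n2 + 1) → Fin (q ^ m1),
          j 0 = Q v (fun t : Fin n2 => j t.succ) ∧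
          ∀ i : Fin (n2 + 1),
            block q m1 m2 w (Fin.cast hn2 i) ∈ Asub (v (Fin.cast hn2 i)) (j i)}).ncard
        = q ^ (q ^ (m1 + m2) - (m1 + m2) - 1)) ∧
    (∀ u ∈ {w : Fin (q ^ (m1 + m2)) → F |
        ∃ v ∈ B, ∃ j : Fin (n2 + 1) → Fin (q ^ m1),
          j 0 = Q v (fun t : Fin n2 => j t.succ) ∧
          ∀ i : Fin (n2 + 1),
            block q m1 m2 w (Fin.cast hn2 i) ∈ Asub (v (Fin.cast hn2 i)) (j i)},
      ∀ u' ∈ {w : Fin (q ^ (m1 + m2)) → F |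
        ∃ v ∈ B, ∃ j : Fin (n2 + 1) → Fin (q ^ m1),
          j 0 = Q v (fun t : Fin n2 => j t.succ) ∧
          ∀ i : Fin (n2 + 1),
            block q m1 m2 w (Fin.cast hn2 i) ∈ Asub (v (Fin.cast hn2 i)) (j i)},
        u ≠ u' → 3 ≤ hammingDist u u') :=
  product_RM_like_general q m1 m2 hq n2 hn2 F A hAdisj hAdist Asub hAsubdisj hAsubcover hAsubcard
    hAsubdist B hBcard hBdist Q hQ
end
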